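/- arXiv:2308.09507 — 2 statements merged into one kernel-verified Lean document; each statement's English description precedes it below -/
import Mathlib

section
/- If q : ℝ → ℍ and q_d : ℝ → ℍ are differentiable curves of unit quaternions satisfying q̇(t) = ½ ω(t) q(t) and (d/dθ) q_d(θ) = ½ ω_d(θ) q_d(θ) for pure quaternions ω, ω_d, and θ : ℝ → ℝ is differentiable, then the error quaternion q_e(t) = q(t) q_d(θ(t))* satisfies q̇_e(t) = ½ ω_e(t) q_e(t), where ω_e(t) = ω(t) + θ̇(t) · q_e(t) ω_d(θ(t))* q_e(t)* (Lemma 1 of the appendix). -/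
open Quaternion

instance : StarModule ℝ ℍ[ℝ] :=
  ⟨fun r a => by simp [Quaternion.star_smul]⟩

/-- Error-quaternion kinematics (Lemma 1): if `q̇ = ½ ω q`, `q̇_d = ½ ω_d q_d` (in `θ`),
then `q_e(t) = q(t) q_d(θ(t))*` satisfies `q̇_e = ½ ω_e q_e` with
`ω_e = ω + θ̇ · q_e ω_d(θ)* q_e*`. -/
theorem error_quaternion_kinematics
    (q qd : ℝ → ℍ[ℝ]) (ω ωd : ℝ → ℍ[ℝ]) (θ θ' : ℝ → ℝ)
    (hq_unit : ∀ t, q t * star (q t) = 1)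
    (hqd_unit : ∀ s, qd s * star (qd s) = 1)
    (hω_pure : ∀ t, (ω t).re = 0)
    (hωd_pure : ∀ s, (ωd s).re = 0)
    (hq : ∀ t, HasDerivAt q ((1 / 2 : ℝ) • (ω t * q t)) t)
    (hqd : ∀ s, HasDerivAt qd ((1 / 2 : ℝ) • (ωd s * qd s)) s)
    (hθ : ∀ t, HasDerivAt θ (θ' t) t) :
    ∀ t,
      HasDerivAt (fun s => q s * star (qd (θ s)))
        ((1 / 2 : ℝ) •
          ((ω t + θ' t •
              (q t * star (qd (θ t)) * star (ωd (θ t)) * star (q t * star (qd (θ t))))) *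
            (q t * star (qd (θ t))))) t := by
  intro t
  have hcomp : HasDerivAt (fun s => qd (θ s))
      (θ' t • ((1 / 2 : ℝ) • (ωd (θ t) * qd (θ t)))) t :=
    (hqd (θ t)).scomp t (hθ t)
  have hstar : HasDerivAt (fun s => star (qd (θ s)))
      (star (θ' t • ((1 / 2 : ℝ) • (ωd (θ t) * qd (θ t))))) t := hcomp.star
  have hmul := (hq t).mul hstar
  convert hmul using 1
  case e'_5 => rfl
  case e'_8 => rfl
  have hqs : star (q t) * q t = 1 := by
    rw [Quaternion.star_mul_self, ← Quaternion.self_mul_star]; exact hq_unit t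
  have key : q t * star (qd (θ t)) * star (ωd (θ t)) * star (q t * star (qd (θ t))) *
      (q t * star (qd (θ t))) = q t * star (qd (θ t)) * star (ωd (θ t)) := by
    rw [star_mul, star_star]
    calc q t * star (qd (θ t)) * star (ωd (θ t)) * (qd (θ t) * star (q t)) *
          (q t * star (qd (θ t)))
        = q t * star (qd (θ t)) * star (ωd (θ t)) * (qd (θ t) *
            (star (q t) * q t) * star (qd (θ t))) := by simp only [mul_assoc]
      _ = q t * star (qd (θ t)) * star (ωd (θ t)) := by
          rw [hqs, mul_one, hqd_unit (θ t), mul_one]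
  rw [smul_mul_assoc, add_mul, smul_mul_assoc, key]
  simp only [StarModule.star_smul, star_trivial, star_mul, smul_add, mul_smul_comm,
    smul_smul, mul_assoc, smul_mul_assoc]
  rw [mul_comm (θ' t)]
end

section
/- Let q̂_e(t) = q̂(t) ∘ q̂_d(θ(t))* be the dual quaternion error between a rigid body pose q̂(t) satisfying (d/dt) q̂ = ½ ω̂ ∘ q̂ and a reference pose q̂_d(θ) satisfying (d/dθ) q̂_d = ½ ω̂_d ∘ q̂_d, with θ : ℝ → ℝ differentiable. Then (d/dt) q̂_e(t) = ½ ω̂_e(t) ∘ q̂_e(t), where ω̂_e(t) = ω̂(t) + θ̇(t) · q̂_e(t) ∘ ω̂_d(θ(t))* ∘ q̂_e(t)*. -/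
open Quaternion DualNumber TrivSqZeroExt

/-- Conjugation of a dual quaternion `q̂ = q_r + ε q_d`: `q̂* = q_r* + ε q_d*`. -/
def dqConj (q : ℍ[ℝ][ε]) : ℍ[ℝ][ε] := (star q.fst, star q.snd)

/-- A dual-quaternion-valued function has a derivative iff both its real and dual
parts do, componentwise. -/
def DQHasDerivAt (f : ℝ → ℍ[ℝ][ε]) (d : ℍ[ℝ][ε]) (t : ℝ) : Prop :=
  HasDerivAt (fun s => (f s).fst) d.fst t ∧ HasDerivAt (fun s => (f s).snd) d.snd t

/-- A dual vector quaternion: both real and dual parts are pure quaternions. -/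
def IsDualVectorQ (v : ℍ[ℝ][ε]) : Prop := v.fst.re = 0 ∧ v.snd.re = 0

set_option maxHeartbeats 1000000
set_option synthInstance.maxHeartbeats 400000

lemma dqConj_fst (x : ℍ[ℝ][ε]) : (dqConj x).fst = star x.fst := rfl
lemma dqConj_snd (x : ℍ[ℝ][ε]) : (dqConj x).snd = star x.snd := rfl

instance inst_s13 : StarModule ℝ ℍ[ℝ] :=
  ⟨fun r a => by rw [star_trivial r, Quaternion.star_smul]⟩

instance : IsScalarTower ℝ ℍ[ℝ][ε] ℍ[ℝ][ε] :=
  ⟨fun r x y => (IsScalarTower.right (R := ℝ) (A := ℍ[ℝ][ε])).smul_assoc r x y⟩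

lemma dqConj_mul (x y : ℍ[ℝ][ε]) : dqConj (x * y) = dqConj y * dqConj x := by
  refine TrivSqZeroExt.ext ?_ ?_
  · simp only [dqConj_fst, TrivSqZeroExt.fst_mul, star_mul]
  · simp only [dqConj_snd, dqConj_fst, TrivSqZeroExt.snd_mul, star_add, star_mul,
      smul_eq_mul, MulOpposite.smul_eq_mul_unop, MulOpposite.unop_op, star_star]
    exact add_comm _ _

lemma dqConj_smul (r : ℝ) (x : ℍ[ℝ][ε]) : dqConj (r • x) = r • dqConj x := by
  refine TrivSqZeroExt.ext ?_ ?_ <;>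
    simp only [dqConj_fst, dqConj_snd, TrivSqZeroExt.fst_smul, TrivSqZeroExt.snd_smul,
      Quaternion.star_smul]

lemma dqConj_dqConj (x : ℍ[ℝ][ε]) : dqConj (dqConj x) = x := by
  refine TrivSqZeroExt.ext ?_ ?_ <;> simp [dqConj_fst, dqConj_snd]

lemma conj_mul_self {x : ℍ[ℝ][ε]} (h : x * dqConj x = 1) : dqConj x * x = 1 := by
  have h1 : x.fst * star x.fst = 1 := by
    have := congrArg TrivSqZeroExt.fst h
    simpa [TrivSqZeroExt.fst_mul, dqConj_fst] using this
  have h2 : x.fst * star x.snd + x.snd * star x.fst = 0 := by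
    have := congrArg TrivSqZeroExt.snd h
    simpa [TrivSqZeroExt.snd_mul, dqConj_fst, dqConj_snd, smul_eq_mul,
      MulOpposite.smul_eq_mul_unop] using this
  have hne : x.fst ≠ 0 := left_ne_zero_of_mul_eq_one h1
  have hinv : star x.fst = x.fst⁻¹ := eq_inv_of_mul_eq_one_right h1
  have h1' : star x.fst * x.fst = 1 := by rw [hinv]; exact inv_mul_cancel₀ hne
  have key : star x.fst * (x.fst * star x.snd + x.snd * star x.fst) * x.fst = 0 := by
    rw [h2]; simp
  have hexp : star x.fst * (x.fst * star x.snd + x.snd * star x.fst) * x.fst =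
      (star x.fst * x.fst) * (star x.snd * x.fst) +
        (star x.fst * x.snd) * (star x.fst * x.fst) := by
    noncomm_ring
  rw [hexp, h1', one_mul, mul_one] at key
  refine TrivSqZeroExt.ext ?_ ?_
  · simpa [TrivSqZeroExt.fst_mul, dqConj_fst] using h1'
  · simp only [TrivSqZeroExt.snd_mul, dqConj_fst, dqConj_snd, smul_eq_mul,
      MulOpposite.smul_eq_mul_unop, MulOpposite.unop_op, TrivSqZeroExt.snd_one]
    rw [add_comm]
    exact key

lemma DQHasDerivAt.mul {f g : ℝ → ℍ[ℝ][ε]} {f' g' : ℍ[ℝ][ε]} {t : ℝ}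
    (hf : DQHasDerivAt f f' t) (hg : DQHasDerivAt g g' t) :
    DQHasDerivAt (fun s => f s * g s) (f' * g t + f t * g') t := by
  constructor
  · have := hf.1.mul hg.1
    simp only [TrivSqZeroExt.fst_mul, TrivSqZeroExt.fst_add]
    exact this
  · have h2 : HasDerivAt (fun s => (f s).fst * (g s).snd + (f s).snd * (g s).fst)
        (f'.fst * (g t).snd + (f t).fst * g'.snd + (f'.snd * (g t).fst + (f t).snd * g'.fst)) t :=
      (hf.1.mul hg.2).add (hf.2.mul hg.1)
    have heq : f'.fst * (g t).snd + (f t).fst * g'.snd + (f'.snd * (g t).fst + (f t).snd * g'.fst)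
        = (f' * g t + f t * g').snd := by
      simp only [TrivSqZeroExt.snd_add, TrivSqZeroExt.snd_mul, smul_eq_mul,
        MulOpposite.smul_eq_mul_unop, MulOpposite.unop_op]
      abel
    rw [heq] at h2
    exact h2.congr_of_eventuallyEq (Filter.Eventually.of_forall fun s => by
      simp [TrivSqZeroExt.snd_mul, smul_eq_mul, MulOpposite.smul_eq_mul_unop])

lemma DQHasDerivAt.dqConj' {f : ℝ → ℍ[ℝ][ε]} {f' : ℍ[ℝ][ε]} {t : ℝ}
    (hf : DQHasDerivAt f f' t) :
    DQHasDerivAt (fun s => dqConj (f s)) (dqConj f') t :=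
  ⟨hf.1.star, hf.2.star⟩

lemma DQHasDerivAt.scomp {f : ℝ → ℍ[ℝ][ε]} {f' : ℍ[ℝ][ε]} {θ : ℝ → ℝ} {θ' t : ℝ}
    (hf : DQHasDerivAt f f' (θ t)) (hθ : HasDerivAt θ θ' t) :
    DQHasDerivAt (fun s => f (θ s)) (θ' • f') t :=
  ⟨hf.1.scomp t hθ, hf.2.scomp t hθ⟩


/-- Dual-quaternion error kinematics: if `(d/dt) q̂ = ½ ω̂ ∘ q̂` and
`(d/dθ) q̂_d = ½ ω̂_d ∘ q̂_d`, then `q̂_e(t) = q̂(t) ∘ q̂_d(θ(t))*` satisfies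
`(d/dt) q̂_e = ½ ω̂_e ∘ q̂_e` with `ω̂_e = ω̂ + θ̇ · q̂_e ∘ ω̂_d(θ)* ∘ q̂_e*`. -/
theorem dual_quaternion_error_kinematics
    (q qd : ℝ → ℍ[ℝ][ε]) (ω ωd : ℝ → ℍ[ℝ][ε]) (θ θ' : ℝ → ℝ)
    (hq_unit : ∀ t, q t * dqConj (q t) = 1)
    (hqd_unit : ∀ s, qd s * dqConj (qd s) = 1)
    (hω_vec : ∀ t, IsDualVectorQ (ω t))
    (hωd_vec : ∀ s, IsDualVectorQ (ωd s))
    (hq : ∀ t, DQHasDerivAt q ((1 / 2 : ℝ) • (ω t * q t)) t)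
    (hqd : ∀ s, DQHasDerivAt qd ((1 / 2 : ℝ) • (ωd s * qd s)) s)
    (hθ : ∀ t, HasDerivAt θ (θ' t) t) :
    ∀ t,
      DQHasDerivAt (fun s => q s * dqConj (qd (θ s)))
        ((1 / 2 : ℝ) •
          ((ω t + θ' t •
              (q t * dqConj (qd (θ t)) * dqConj (ωd (θ t)) *
                dqConj (q t * dqConj (qd (θ t))))) *
            (q t * dqConj (qd (θ t))))) t := by
  intro t
  have hcomp : DQHasDerivAt (fun s => dqConj (qd (θ s)))
      (dqConj (θ' t • ((1 / 2 : ℝ) • (ωd (θ t) * qd (θ t))))) t :=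
    (DQHasDerivAt.scomp (hqd (θ t)) (hθ t)).dqConj'
  have hderiv := (hq t).mul hcomp
  set Q := q t
  set Qd := qd (θ t)
  set W := ω t
  set Wd := ωd (θ t)
  set c := θ' t
  have hcQ : dqConj Q * Q = 1 := conj_mul_self (hq_unit t)
  have hQd : Qd * dqConj Qd = 1 := hqd_unit (θ t)
  have keyeq : (1 / 2 : ℝ) •
      ((W + c • (Q * dqConj Qd * dqConj Wd * dqConj (Q * dqConj Qd))) * (Q * dqConj Qd)) =
      (1 / 2 : ℝ) • (W * Q) * dqConj Qd + Q * dqConj (c • ((1 / 2 : ℝ) • (Wd * Qd))) := by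
    rw [dqConj_smul, dqConj_smul, dqConj_mul, dqConj_mul, dqConj_dqConj]
    rw [add_mul, smul_add]
    congr 1
    · rw [smul_mul_assoc, mul_assoc]
    · rw [smul_mul_assoc, mul_smul_comm, mul_smul_comm, smul_comm]
      congr 2
      calc Q * dqConj Qd * dqConj Wd * (Qd * dqConj Q) * (Q * dqConj Qd)
          = Q * dqConj Qd * dqConj Wd * Qd * (dqConj Q * Q) * dqConj Qd := by
            noncomm_ring
        _ = Q * dqConj Qd * dqConj Wd * (Qd * dqConj Qd) := by rw [hcQ]; noncomm_ring
        _ = Q * (dqConj Qd * dqConj Wd) := by rw [hQd]; noncomm_ring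
  rw [keyeq]
  exact hderiv
end
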